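/- arXiv:2004.09778 — 3 statements merged into one kernel-verified Lean document; each statement's English description precedes it below -/
import Mathlib

section
/- Let A be a complex n×n matrix all of whose eigenvalues have negative real part, and let r_c(A) = inf_{ω∈ℝ} σ_min(iωI − A), where σ_min denotes the smallest singular value. If B is a complex n×n matrix with ‖B‖ < r_c(A), then all eigenvalues of A + B have negative real part. -/
/-!
Moving to the Banach algebra of operators on `ℂⁿ`, the resolvent `R(z) = (z - A)⁻¹` is
holomorphic on the closed right half plane and tends to `0` at infinity, while on the imaginary
axis `‖R(iω)‖ = σ_min(iω - A)⁻¹ ≤ r_c(A)⁻¹`. By the Phragmén–Lindelöf principle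
`‖R(z)‖ ≤ r_c(A)⁻¹` whenever `0 ≤ re z`, so for `‖B‖ < r_c(A)` the Neumann series makes
`z - A - B = (z - A) - B` invertible: no such `z` is an eigenvalue of `A + B`.
-/

open Matrix

/-- The operator 2-norm of a complex `n × n` matrix. -/
noncomputable def opNormC {n : ℕ} (A : Matrix (Fin n) (Fin n) ℂ) : ℝ :=
  ‖Matrix.toEuclideanCLM (𝕜 := ℂ) A‖

/-- The smallest singular value of a complex `n × n` matrix:
the infimum of `‖A x‖` over unit vectors `x`. -/
noncomputable def sMin {n : ℕ} (A : Matrix (Fin n) (Fin n) ℂ) : ℝ :=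
  ⨅ x : {x : EuclideanSpace ℂ (Fin n) // ‖x‖ = 1},
    ‖Matrix.toEuclideanCLM (𝕜 := ℂ) A (x : EuclideanSpace ℂ (Fin n))‖

/-- The complex stability radius `r_c(A) = inf_{ω ∈ ℝ} σ_min(iω I − A)`. -/
noncomputable def stabRadius {n : ℕ} (A : Matrix (Fin n) (Fin n) ℂ) : ℝ :=
  ⨅ ω : ℝ, sMin ((Complex.I * (ω : ℂ)) • (1 : Matrix (Fin n) (Fin n) ℂ) - A)

open Complex Filter

theorem isUnit_sub_of_norm_inverse_le {R : Type*} [NormedRing R] [HasSummableGeomSeries R]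
    {x t : R} {C : ℝ} (hx : IsUnit x) (hC : ‖Ring.inverse x‖ ≤ C) (ht : ‖t‖ < C⁻¹) :
    IsUnit (x - t) := by
  nontriviality R
  obtain ⟨u, rfl⟩ := hx
  rw [Ring.inverse_unit] at hC
  have ht' : ‖-t‖ < ‖(↑u⁻¹ : R)‖⁻¹ := by
    rw [norm_neg]
    exact ht.trans_le (inv_anti₀ (Units.norm_pos u⁻¹) hC)
  rw [sub_eq_add_neg]
  exact (u.add (-t) ht').isUnit

theorem ContinuousLinearMap.norm_inverse_le_of_mul_norm_le {𝕜 E : Type*}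
    [NontriviallyNormedField 𝕜] [NormedAddCommGroup E] [NormedSpace 𝕜 E] {T : E →L[𝕜] E}
    (hT : IsUnit T) {s : ℝ} (hs : 0 < s) (h : ∀ x, s * ‖x‖ ≤ ‖T x‖) : ‖Ring.inverse T‖ ≤ s⁻¹ := by
  refine (Ring.inverse T).opNorm_le_bound (inv_nonneg.2 hs.le) fun y => ?_
  have hTy : T (Ring.inverse T y) = y :=
    congrArg (fun S : E →L[𝕜] E => S y) (Ring.mul_inverse_cancel T hT)
  rw [inv_mul_eq_div, le_div_iff₀ hs, mul_comm]
  simpa only [hTy] using h (Ring.inverse T y)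

section BanachAlgebra

variable {A : Type*} [NormedRing A] [NormedAlgebra ℂ A] [CompleteSpace A]

theorem norm_resolvent_le_of_re_nonneg {a : A} (ha : ∀ z ∈ spectrum ℂ a, z.re < 0) {C : ℝ}
    (hC : ∀ ω : ℝ, ‖resolvent a (ω * I)‖ ≤ C) {z : ℂ} (hz : 0 ≤ z.re) :
    ‖resolvent a z‖ ≤ C := by
  have hd : DiffContOnCl ℂ (resolvent a) {w : ℂ | 0 < w.re} := by
    refine DifferentiableOn.diffContOnCl fun w hw => ?_
    rw [closure_setOfPred_lt_re, Set.mem_ofPred_eq] at hw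
    have hρ : w ∈ resolventSet ℂ a := spectrum.notMem_iff.1 fun h => (ha w h).not_ge hw
    exact (spectrum.hasDerivAt_resolvent_const_left hρ).differentiableAt.differentiableWithinAt
  -- `resolvent a` tends to `0` at infinity, so the growth condition holds with exponent `0`.
  have hexp : resolvent a =O[Bornology.cobounded ℂ ⊓ 𝓟 {w : ℂ | 0 < w.re}]
      fun w => Real.exp (0 * ‖w‖ ^ (0 : ℝ)) := by
    simpa only [zero_mul, Real.exp_zero] using
      ((spectrum.resolvent_tendsto_cobounded a).isBigO_one ℝ).mono inf_le_left
  exact PhragmenLindelof.right_half_plane_of_tendsto_zero_on_real hd ⟨0, two_pos, 0, hexp⟩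
    ((spectrum.resolvent_tendsto_cobounded a).comp (RCLike.tendsto_ofReal_atTop_cobounded ℂ))
    hC hz

theorem re_neg_of_mem_spectrum_add {a b : A} (ha : ∀ z ∈ spectrum ℂ a, z.re < 0) {C : ℝ}
    (hC : ∀ ω : ℝ, ‖resolvent a (ω * I)‖ ≤ C) (hb : ‖b‖ < C⁻¹) :
    ∀ z ∈ spectrum ℂ (a + b), z.re < 0 := by
  intro z hz
  by_contra! hre
  have hu : IsUnit (algebraMap ℂ A z - a) := spectrum.notMem_iff.1 fun h => (ha z h).not_ge hre
  refine hz (spectrum.mem_resolventSet_iff.2 ?_)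
  rw [← sub_sub]
  exact isUnit_sub_of_norm_inverse_le hu (norm_resolvent_le_of_re_nonneg ha hC hre) hb

end BanachAlgebra

section StabilityRadius

variable {n : ℕ}

theorem sMin_nonneg (M : Matrix (Fin n) (Fin n) ℂ) : 0 ≤ sMin M :=
  Real.iInf_nonneg fun _ => norm_nonneg _

theorem sMin_le_norm_apply (M : Matrix (Fin n) (Fin n) ℂ) {x : EuclideanSpace ℂ (Fin n)}
    (hx : ‖x‖ = 1) : sMin M ≤ ‖toEuclideanCLM (𝕜 := ℂ) M x‖ :=
  ciInf_le ⟨0, Set.forall_mem_range.2 fun _ => norm_nonneg _⟩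
    (⟨x, hx⟩ : {x : EuclideanSpace ℂ (Fin n) // ‖x‖ = 1})

theorem sMin_mul_norm_le (M : Matrix (Fin n) (Fin n) ℂ) (x : EuclideanSpace ℂ (Fin n)) :
    sMin M * ‖x‖ ≤ ‖toEuclideanCLM (𝕜 := ℂ) M x‖ := by
  rcases eq_or_ne x 0 with rfl | hx
  · rw [norm_zero, mul_zero]
    exact norm_nonneg _
  have hx' : 0 < ‖x‖ := norm_pos_iff.2 hx
  have hunit : ‖((‖x‖⁻¹ : ℝ) : ℂ) • x‖ = 1 := by
    rw [norm_smul, norm_real, norm_inv, norm_norm, inv_mul_cancel₀ hx'.ne']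
  have hle := sMin_le_norm_apply M hunit
  rwa [map_smul, norm_smul, norm_real, norm_inv, norm_norm, inv_mul_eq_div, le_div_iff₀ hx']
    at hle

theorem stabRadius_le_sMin (M : Matrix (Fin n) (Fin n) ℂ) (ω : ℝ) :
    stabRadius M ≤ sMin ((I * (ω : ℂ)) • (1 : Matrix (Fin n) (Fin n) ℂ) - M) :=
  ciInf_le ⟨0, Set.forall_mem_range.2 fun _ => sMin_nonneg _⟩ ω

theorem norm_resolvent_toEuclideanCLM_le {M : Matrix (Fin n) (Fin n) ℂ}
    (hM : ∀ z ∈ spectrum ℂ M, z.re < 0) (hr : 0 < stabRadius M) (ω : ℝ) :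
    ‖resolvent (toEuclideanCLM (𝕜 := ℂ) M) (ω * I)‖ ≤ (stabRadius M)⁻¹ := by
  have hφ : algebraMap ℂ _ (ω * I) - toEuclideanCLM (𝕜 := ℂ) M =
      toEuclideanCLM (𝕜 := ℂ) ((I * (ω : ℂ)) • (1 : Matrix (Fin n) (Fin n) ℂ) - M) := by
    rw [map_sub, map_smul, map_one, Algebra.algebraMap_eq_smul_one, mul_comm]
  have hunit : IsUnit
      (toEuclideanCLM (𝕜 := ℂ) ((I * (ω : ℂ)) • (1 : Matrix (Fin n) (Fin n) ℂ) - M)) := by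
    rw [← hφ, ← spectrum.notMem_iff, AlgEquiv.spectrum_eq]
    exact fun h => (hM _ h).ne (by simp)
  rw [resolvent, hφ]
  exact ContinuousLinearMap.norm_inverse_le_of_mul_norm_le hunit hr fun x =>
    (mul_le_mul_of_nonneg_right (stabRadius_le_sMin M ω) (norm_nonneg x)).trans
      (sMin_mul_norm_le _ x)

end StabilityRadius

/-- If all eigenvalues of `A` have negative real part and `‖B‖ < r_c(A)`, then all
eigenvalues of `A + B` have negative real part. -/
theorem eigenvalues_neg_re_of_opNorm_lt_stabRadius {n : ℕ}
    (A B : Matrix (Fin n) (Fin n) ℂ)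
    (hA : ∀ μ ∈ spectrum ℂ A, μ.re < 0)
    (hB : opNormC B < stabRadius A) :
    ∀ μ ∈ spectrum ℂ (A + B), μ.re < 0 := by
  have hr : 0 < stabRadius A := (norm_nonneg _).trans_lt hB
  have hA' : ∀ z ∈ spectrum ℂ (toEuclideanCLM (𝕜 := ℂ) A), z.re < 0 := by
    rwa [AlgEquiv.spectrum_eq]
  have hB' : ‖toEuclideanCLM (𝕜 := ℂ) B‖ < (stabRadius A)⁻¹⁻¹ := by
    rwa [inv_inv]
  have h := re_neg_of_mem_spectrum_add hA' (norm_resolvent_toEuclideanCLM_le hA hr) hB'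
  rwa [← map_add, AlgEquiv.spectrum_eq] at h
end

section
/- Let τ > 0, h > 0, k_p > 0, and let k_v satisfy condition (h3), i.e. k_v > (√((1 − k_p h²)² + 4 k_p h τ) − (1 + k_p h²))/(2h) when h < τ, and k_v > 0 when h ≥ τ. Then every complex root z of the cubic polynomial z³ + ((1 + k_v h)/τ) z² + ((k_v + k_p h)/τ) z + k_p/τ has negative real part. -/
/-- Condition (h3) of the paper: a lower bound on the velocity feedback gain `k_v`
in terms of `τ`, `h`, `k_p`. -/
def condH3 (τ h kp kv : ℝ) : Prop :=
  if h < τ then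
    kv > (Real.sqrt ((1 - kp * h ^ 2) ^ 2 + 4 * kp * h * τ) - (1 + kp * h ^ 2)) / (2 * h)
  else
    kv > 0

/-- Routh–Hurwitz criterion for a monic cubic: if `a, b, c > 0` and `a * b > c`, then every
complex root of `z³ + a z² + b z + c` has negative real part. -/
lemma routh_cubic (a b c : ℝ) (ha : 0 < a) (hb : 0 < b) (hc : 0 < c) (hab : c < a * b)
    (z : ℂ) (hz : z ^ 3 + (a : ℂ) * z ^ 2 + (b : ℂ) * z + (c : ℂ) = 0) : z.re < 0 := by
  by_contra hx
  push_neg at hx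
  have h1 := congrArg Complex.re hz
  have h2 := congrArg Complex.im hz
  simp only [Complex.add_re, Complex.add_im, Complex.mul_re, Complex.mul_im,
    Complex.ofReal_re, Complex.ofReal_im, Complex.zero_re, Complex.zero_im,
    pow_succ, pow_zero, one_mul, Complex.one_re, Complex.one_im, Complex.mul_re,
    Complex.mul_im, zero_mul, mul_zero, sub_zero, zero_sub, zero_add, add_zero] at h1 h2
  set x := z.re
  set y := z.im
  rcases eq_or_ne y 0 with hy | hy
  · rw [hy] at h1
    nlinarith [pow_nonneg hx 3, sq_nonneg x, mul_nonneg hx hx]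
  · have h2' : y * (3 * x ^ 2 - y ^ 2 + 2 * a * x + b) = 0 := by linear_combination h2
    rcases mul_eq_zero.mp h2' with h | h
    · exact hy h
    have hy2 : y ^ 2 = 3 * x ^ 2 + 2 * a * x + b := by linarith
    have key : c - a * b = 8 * x ^ 3 + 8 * a * x ^ 2 + 2 * b * x + 2 * a ^ 2 * x := by
      linear_combination h1 + (3 * x + a) * hy2
    nlinarith [pow_nonneg hx 3, mul_nonneg hx hx, mul_nonneg (mul_nonneg ha.le hx) hx,
      mul_nonneg hb.le hx, mul_nonneg (mul_nonneg ha.le ha.le) hx]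

/-- Under condition (h3), every complex root of the characteristic polynomial
`z³ + ((1 + k_v h)/τ) z² + ((k_v + k_p h)/τ) z + k_p/τ` of the matrix `𝒜`
has negative real part. -/
theorem cubic_roots_neg_re_of_condH3 (τ h kp kv : ℝ)
    (hτ : 0 < τ) (hh : 0 < h) (hkp : 0 < kp) (hkv : condH3 τ h kp kv) :
    ∀ z : ℂ,
      z ^ 3 + (((1 + kv * h) / τ : ℝ) : ℂ) * z ^ 2 + (((kv + kp * h) / τ : ℝ) : ℂ) * z
        + ((kp / τ : ℝ) : ℂ) = 0 → z.re < 0 := by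
  unfold condH3 at hkv
  -- `kv > 0` together with the key quadratic inequality (equivalent to `a * b > c`)
  have main : 0 < kv ∧ 0 < h * kv ^ 2 + (1 + kp * h ^ 2) * kv + kp * h - kp * τ := by
    split_ifs at hkv with hlt
    · set D := (1 - kp * h ^ 2) ^ 2 + 4 * kp * h * τ with hD
      have hDnn : 0 ≤ D := by positivity
      have hsq : Real.sqrt D ^ 2 = D := Real.sq_sqrt hDnn
      have hsn : 0 ≤ Real.sqrt D := Real.sqrt_nonneg D
      have hkv' : Real.sqrt D - (1 + kp * h ^ 2) < kv * (2 * h) :=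
        (div_lt_iff₀ (by positivity)).mp hkv
      have hgt : 1 + kp * h ^ 2 < Real.sqrt D := by
        nlinarith [sq_nonneg (Real.sqrt D - (1 + kp * h ^ 2)), mul_pos hkp hh,
          mul_pos (mul_pos hkp hh) (sub_pos.mpr hlt)]
      constructor
      · nlinarith
      · nlinarith [sq_nonneg (2 * h * kv + (1 + kp * h ^ 2) - Real.sqrt D)]
    · push_neg at hlt
      refine ⟨hkv, ?_⟩
      nlinarith [mul_pos hh (mul_pos hkv hkv), mul_nonneg hkp.le (sub_nonneg.mpr hlt),
        mul_pos (mul_pos hkp (mul_pos hh hh)) hkv]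
  obtain ⟨hkv0, hkey⟩ := main
  intro z hz
  apply routh_cubic ((1 + kv * h) / τ) ((kv + kp * h) / τ) (kp / τ) _ _ _ _ z hz
  · positivity
  · positivity
  · positivity
  · rw [div_mul_div_comm, div_lt_div_iff₀ hτ (by positivity)]
    nlinarith [mul_pos hτ hτ]
end

section
/- (Core frequency-domain step of Theorem 4.) Let τ > 0, h > 0, b > 0 and k_p, k_v, k_a, β₁, β₂, β₃ ∈ ℝ, and define n̄₁ = b k_pβ₂ + b k_vβ₃, n̄₂ = b k_pβ₁ + b k_vβ₂ + b k_aβ₃, n̄₃ = b k_vβ₁ + b k_aβ₂ + b k_p, d̄₁ = b k_pβ₂ + (b k_ph + b k_v)β₃, d̄₂ = b k_pβ₁ + (b k_ph + b k_v)β₂ + (b + b k_vh)β₃, d̄₃ = (b k_ph + b k_v)β₁ + (b + b k_vh)β₂ + β₃ + b k_p, d̄₄ = (k_a/τ − b k_a + b + b k_vh)β₁ + β₂ + b k_ph + b k_v, d̄₅ = β₁ + k_a/τ − b k_a + b + b k_vh, and x_n(ω) = b k_pβ₃ − n̄₂ω² + b k_vω⁴, y_n(ω) = n̄₁ω − n̄₃ω³,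 x_d(ω) = b k_pβ₃ − d̄₂ω² + d̄₄ω⁴ − ω⁶, y_d(ω) = d̄₁ω − d̄₃ω³ + d̄₅ω⁵. Suppose the five inequalities hold: 2b k_pβ₃n̄₂ + d̄₁² − 2b k_pβ₃d̄₂ − n̄₁² ≥ 0; 2n̄₁n̄₃ + 2b k_pβ₃d̄₄ + d̄₂² − n̄₂² − 2b²k_pk_vβ₃ − 2d̄₁d̄₃ ≥ 0; 2n̄₂ b k_v + 2d̄₁d̄₅ + d̄₃² − n̄₃² − 2b k_pβ₃ − 2d̄₂d̄₄ ≥ 0; d̄₄² + 2d̄₂ − b²k_v² − 2d̄₃d̄₅ ≥ 0; d̄₅² − 2d̄₄ ≥ 0. Then for all ω ∈ ℝ: x_n(ω)² + y_n(ω)² ≤ x_d(ω)² + y_d(ω)², i.e. |G_e(iω)| ≤ 1 for the error propagation transfer function G_e(iω) = (x_n(ω) + i y_n(ω))/(x_d(ω) + i y_d(ω)). -/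
/-- Core frequency-domain step of Theorem 4 (uncertain vehicle model with
actuation gain `b = 1/τ + ε`): if the five displayed coefficient inequalities
hold, then `x_n(ω)² + y_n(ω)² ≤ x_d(ω)² + y_d(ω)²` for all `ω`, i.e.
`|G_e(iω)| ≤ 1`. -/
theorem string_stability_uncertain_core
    (τ h b kp kv ka β₁ β₂ β₃ : ℝ) (n₁ n₂ n₃ d₁ d₂ d₃ d₄ d₅ : ℝ)
    (hτ : 0 < τ) (hh : 0 < h) (hb : 0 < b)
    (hn₁ : n₁ = b * kp * β₂ + b * kv * β₃)
    (hn₂ : n₂ = b * kp * β₁ + b * kv * β₂ + b * ka * β₃)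
    (hn₃ : n₃ = b * kv * β₁ + b * ka * β₂ + b * kp)
    (hd₁ : d₁ = b * kp * β₂ + (b * kp * h + b * kv) * β₃)
    (hd₂ : d₂ = b * kp * β₁ + (b * kp * h + b * kv) * β₂ + (b + b * kv * h) * β₃)
    (hd₃ : d₃ = (b * kp * h + b * kv) * β₁ + (b + b * kv * h) * β₂ + β₃ + b * kp)
    (hd₄ : d₄ = (ka / τ - b * ka + b + b * kv * h) * β₁ + β₂ + b * kp * h + b * kv)
    (hd₅ : d₅ = β₁ + ka / τ - b * ka + b + b * kv * h)
    (h₁ : 2 * b * kp * β₃ * n₂ + d₁ ^ 2 - 2 * b * kp * β₃ * d₂ - n₁ ^ 2 ≥ 0)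
    (h₂ : 2 * n₁ * n₃ + 2 * b * kp * β₃ * d₄ + d₂ ^ 2 - n₂ ^ 2
        - 2 * b ^ 2 * kp * kv * β₃ - 2 * d₁ * d₃ ≥ 0)
    (h₃ : 2 * n₂ * (b * kv) + 2 * d₁ * d₅ + d₃ ^ 2 - n₃ ^ 2 - 2 * b * kp * β₃
        - 2 * d₂ * d₄ ≥ 0)
    (h₄ : d₄ ^ 2 + 2 * d₂ - b ^ 2 * kv ^ 2 - 2 * d₃ * d₅ ≥ 0)
    (h₅ : d₅ ^ 2 - 2 * d₄ ≥ 0) :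
    ∀ ω : ℝ,
      (b * kp * β₃ - n₂ * ω ^ 2 + b * kv * ω ^ 4) ^ 2 + (n₁ * ω - n₃ * ω ^ 3) ^ 2 ≤
        (b * kp * β₃ - d₂ * ω ^ 2 + d₄ * ω ^ 4 - ω ^ 6) ^ 2
          + (d₁ * ω - d₃ * ω ^ 3 + d₅ * ω ^ 5) ^ 2 := by
  intro ω
  have key : (b * kp * β₃ - d₂ * ω ^ 2 + d₄ * ω ^ 4 - ω ^ 6) ^ 2
        + (d₁ * ω - d₃ * ω ^ 3 + d₅ * ω ^ 5) ^ 2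
      - ((b * kp * β₃ - n₂ * ω ^ 2 + b * kv * ω ^ 4) ^ 2 + (n₁ * ω - n₃ * ω ^ 3) ^ 2)
      = (2 * b * kp * β₃ * n₂ + d₁ ^ 2 - 2 * b * kp * β₃ * d₂ - n₁ ^ 2) * ω ^ 2
        + (2 * n₁ * n₃ + 2 * b * kp * β₃ * d₄ + d₂ ^ 2 - n₂ ^ 2
            - 2 * b ^ 2 * kp * kv * β₃ - 2 * d₁ * d₃) * ω ^ 4
        + (2 * n₂ * (b * kv) + 2 * d₁ * d₅ + d₃ ^ 2 - n₃ ^ 2 - 2 * b * kp * β₃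
            - 2 * d₂ * d₄) * ω ^ 6
        + (d₄ ^ 2 + 2 * d₂ - b ^ 2 * kv ^ 2 - 2 * d₃ * d₅) * ω ^ 8
        + (d₅ ^ 2 - 2 * d₄) * ω ^ 10 + ω ^ 12 := by ring
  linarith [mul_nonneg h₁ (sq_nonneg ω), mul_nonneg h₂ (sq_nonneg (ω ^ 2)),
    mul_nonneg h₃ (sq_nonneg (ω ^ 3)), mul_nonneg h₄ (sq_nonneg (ω ^ 4)),
    mul_nonneg h₅ (sq_nonneg (ω ^ 5)), sq_nonneg (ω ^ 6), key]
end
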